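/- Let U, X ∈ ℝ^{n₁×r} and V, Y ∈ ℝ^{n₂×r}, and write W = [U; V], Z = [X; Y] (vertical concatenation). If dist(W, Z) ≤ (1/4)‖Z‖_{op}, then ‖UVᵀ − XYᵀ‖_F ≤ (9/(4√2))·‖Z‖_{op}·dist(W, Z). -/

import Mathlib

open Matrix

noncomputable def vnorm {ι : Type*} [Fintype ι] (v : ι → ℝ) : ℝ :=
  Real.sqrt (∑ i, v i ^ 2)

noncomputable def frob {α β : Type*} [Fintype α] [Fintype β] (M : Matrix α β ℝ) : ℝ :=
  Real.sqrt (∑ i, ∑ j, M i j ^ 2)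

noncomputable def sval {α β : Type*} [Fintype α] [Fintype β] (M : Matrix α β ℝ) (k : ℕ) : ℝ :=
  sSup { t : ℝ | ∃ V : Submodule ℝ (β → ℝ), Module.finrank ℝ V = k ∧
    ∀ v ∈ V, t * vnorm v ≤ vnorm (M.mulVec v) }

noncomputable def opNorm {α β : Type*} [Fintype α] [Fintype β] (M : Matrix α β ℝ) : ℝ :=
  sval M 1

noncomputable def pdist {α ρ : Type*} [Fintype α] [Fintype ρ] [DecidableEq ρ]
    (U X : Matrix α ρ ℝ) : ℝ :=
  sInf { d : ℝ | ∃ R : Matrix ρ ρ ℝ, Rᵀ * R = 1 ∧ d = frob (U - X * R) }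

noncomputable def mip {α β : Type*} [Fintype α] [Fintype β] (A B : Matrix α β ℝ) : ℝ :=
  ∑ i, ∑ j, A i j * B i j

noncomputable def mapA {m : ℕ} {α β : Type*} [Fintype α] [Fintype β]
    (A : Fin m → Matrix α β ℝ) (Z : Matrix α β ℝ) : Fin m → ℝ :=
  fun k => mip (A k) Z

def HasRIP {m n₁ n₂ : ℕ} (A : Fin m → Matrix (Fin n₁) (Fin n₂) ℝ) (s : ℕ) (δ : ℝ) : Prop :=
  ∀ Z : Matrix (Fin n₁) (Fin n₂) ℝ, Z.rank ≤ s →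
    (1 - δ) * frob Z ^ 2 ≤ ∑ k, mapA A Z k ^ 2 ∧
      ∑ k, mapA A Z k ^ 2 ≤ (1 + δ) * frob Z ^ 2

noncomputable def gradU {m n₁ n₂ r : ℕ} (A : Fin m → Matrix (Fin n₁) (Fin n₂) ℝ)
    (M : Matrix (Fin n₁) (Fin n₂) ℝ)
    (U : Matrix (Fin n₁) (Fin r) ℝ) (V : Matrix (Fin n₂) (Fin r) ℝ) :
    Matrix (Fin n₁) (Fin r) ℝ :=
  (∑ k, mip (A k) (U * Vᵀ - M) • (A k * V)) + (1 / 4 : ℝ) • (U * (Uᵀ * U - Vᵀ * V))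

noncomputable def gradV {m n₁ n₂ r : ℕ} (A : Fin m → Matrix (Fin n₁) (Fin n₂) ℝ)
    (M : Matrix (Fin n₁) (Fin n₂) ℝ)
    (U : Matrix (Fin n₁) (Fin r) ℝ) (V : Matrix (Fin n₂) (Fin r) ℝ) :
    Matrix (Fin n₂) (Fin r) ℝ :=
  (∑ k, mip (A k) (U * Vᵀ - M) • ((A k)ᵀ * U)) + (1 / 4 : ℝ) • (V * (Vᵀ * V - Uᵀ * U))

noncomputable def gradg {m n₁ n₂ r : ℕ} (A : Fin m → Matrix (Fin n₁) (Fin n₂) ℝ)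
    (M : Matrix (Fin n₁) (Fin n₂) ℝ)
    (U : Matrix (Fin n₁) (Fin r) ℝ) (V : Matrix (Fin n₂) (Fin r) ℝ) :
    Matrix (Fin n₁ ⊕ Fin n₂) (Fin r) ℝ :=
  Matrix.fromRows (gradU A M U V) (gradV A M U V)

/-!
Fix an orthogonal `R` and put `X' = XR`, `Y' = YR`, so that `X'Y'ᵀ = XYᵀ`, and split
`E = W - ZR` into the blocks `E_U = U - X'`, `E_V = V - Y'`. Then
`UVᵀ - XYᵀ = X' E_Vᵀ + E_U Y'ᵀ + E_U E_Vᵀ`. As row blocks of `ZR`, both `X'` and `Y'` have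
operator norm at most `‖Z‖_op`, so with `a = ‖E_U‖_F`, `b = ‖E_V‖_F`, `d = ‖E‖_F = √(a² + b²)`,
`‖UVᵀ - XYᵀ‖_F ≤ ‖Z‖_op (a + b) + ab ≤ √2 ‖Z‖_op d + d² / 2`.
The right-hand side is continuous in `d`, so the bound passes to the infimum `dist(W, Z)` over `R`;
finally `dist(W, Z) ≤ ‖Z‖_op / 4` and `√2 + 1/8 ≤ 9 / (4√2)`.
-/

section Norms

variable {ι α β ρ : Type*} [Fintype ι] [Fintype α] [Fintype β] [Fintype ρ]

attribute [local instance] Matrix.frobeniusNormedAddCommGroup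

lemma vnorm_eq_norm (v : ι → ℝ) : vnorm v = ‖(WithLp.toLp 2 v : EuclideanSpace ℝ ι)‖ := by
  simp [vnorm, EuclideanSpace.norm_eq, Real.norm_eq_abs, sq_abs]

lemma vnorm_nonneg (v : ι → ℝ) : 0 ≤ vnorm v := Real.sqrt_nonneg _

lemma vnorm_pos {v : ι → ℝ} (hv : v ≠ 0) : 0 < vnorm v := by
  rw [vnorm_eq_norm, norm_pos_iff]
  exact fun h => hv (congrArg WithLp.ofLp h)

lemma vnorm_smul (c : ℝ) (v : ι → ℝ) : vnorm (c • v) = |c| * vnorm v := by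
  rw [vnorm_eq_norm, vnorm_eq_norm, WithLp.toLp_smul, norm_smul, Real.norm_eq_abs]

lemma vnorm_sq (v : ι → ℝ) : vnorm v ^ 2 = ∑ i, v i ^ 2 :=
  Real.sq_sqrt (Finset.sum_nonneg fun _ _ => sq_nonneg _)

lemma vnorm_le_vnorm_sumElim_left (a : α → ℝ) (b : β → ℝ) : vnorm a ≤ vnorm (a ⊕ᵥ b) :=
  Real.sqrt_le_sqrt (by simp [Fintype.sum_sum_type]; positivity)

lemma vnorm_le_vnorm_sumElim_right (a : α → ℝ) (b : β → ℝ) : vnorm b ≤ vnorm (a ⊕ᵥ b) :=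
  Real.sqrt_le_sqrt (by simp [Fintype.sum_sum_type]; positivity)

lemma vnorm_mulVec_of_transpose_mul_self [DecidableEq ρ] {R : Matrix ρ ρ ℝ} (hR : Rᵀ * R = 1)
    (w : ρ → ℝ) : vnorm (R *ᵥ w) = vnorm w := by
  have h : (R *ᵥ w) ⬝ᵥ (R *ᵥ w) = w ⬝ᵥ w := by
    rw [dotProduct_mulVec, ← mulVec_transpose, mulVec_mulVec, hR, one_mulVec]
  simpa [vnorm, dotProduct, pow_two] using congrArg Real.sqrt h

lemma frob_eq_norm (M : Matrix α β ℝ) : frob M = ‖M‖ := by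
  rw [frobenius_norm_def, ← Real.sqrt_eq_rpow]
  simp [frob, Real.norm_eq_abs, sq_abs]

lemma frob_nonneg (M : Matrix α β ℝ) : 0 ≤ frob M := Real.sqrt_nonneg _

lemma frob_sq (M : Matrix α β ℝ) : frob M ^ 2 = ∑ i, vnorm (M i) ^ 2 := by
  simp only [vnorm_sq, frob]
  exact Real.sq_sqrt (Finset.sum_nonneg fun _ _ => Finset.sum_nonneg fun _ _ => sq_nonneg _)

lemma frob_fromRows_sq (A : Matrix α ρ ℝ) (B : Matrix β ρ ℝ) :
    frob (fromRows A B) ^ 2 = frob A ^ 2 + frob B ^ 2 := by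
  simp only [frob_sq, Fintype.sum_sum_type]
  rfl

lemma frob_add_le (A B : Matrix α β ℝ) : frob (A + B) ≤ frob A + frob B := by
  simpa only [frob_eq_norm] using norm_add_le A B

lemma frob_transpose (M : Matrix α β ℝ) : frob Mᵀ = frob M := by
  simpa only [frob_eq_norm] using frobenius_norm_transpose M

lemma vnorm_mulVec_le_frob (M : Matrix α β ℝ) (v : β → ℝ) :
    vnorm (M *ᵥ v) ≤ frob M * vnorm v := by
  simp only [vnorm_eq_norm, frob_eq_norm, ← frobenius_norm_replicateCol (ι := Unit),
    replicateCol_mulVec]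
  exact frobenius_norm_mul _ _

lemma frob_mul_transpose_le {A : Matrix α ρ ℝ} {c : ℝ} (hc : 0 ≤ c)
    (hA : ∀ w, vnorm (A *ᵥ w) ≤ c * vnorm w) (B : Matrix β ρ ℝ) :
    frob (B * Aᵀ) ≤ c * frob B := by
  have hrow : ∀ j, (B * Aᵀ) j = A *ᵥ B j := fun j => by
    ext i; simp [mul_apply, mulVec, dotProduct, mul_comm]
  rw [← pow_le_pow_iff_left₀ (frob_nonneg _) (mul_nonneg hc (frob_nonneg _)) two_ne_zero,
    mul_pow, frob_sq, frob_sq, Finset.mul_sum]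
  refine Finset.sum_le_sum fun j _ => ?_
  rw [hrow, ← mul_pow]
  exact pow_le_pow_left₀ (vnorm_nonneg _) (hA _) 2

lemma frob_mul_transpose_le_frob_mul_frob (A : Matrix α ρ ℝ) (B : Matrix β ρ ℝ) :
    frob (B * Aᵀ) ≤ frob A * frob B :=
  frob_mul_transpose_le (frob_nonneg A) (vnorm_mulVec_le_frob A) B

end Norms

section OperatorNorm

variable {α β : Type*} [Fintype α] [Fintype β]

lemma vnorm_mulVec_le_opNorm (M : Matrix α β ℝ) (v : β → ℝ) :
    vnorm (M *ᵥ v) ≤ opNorm M * vnorm v := by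
  rcases eq_or_ne v 0 with rfl | hv
  · simp [vnorm]
  have hbdd : BddAbove {t : ℝ | ∃ V : Submodule ℝ (β → ℝ), Module.finrank ℝ V = 1 ∧
      ∀ w ∈ V, t * vnorm w ≤ vnorm (M *ᵥ w)} := by
    refine ⟨frob M, fun t ⟨V, hV, ht⟩ => ?_⟩
    obtain ⟨w, hwV, hw⟩ := Submodule.exists_mem_ne_zero_of_ne_bot
      (p := V) (fun h => by subst h; simp at hV)
    exact le_of_mul_le_mul_right ((ht w hwV).trans (vnorm_mulVec_le_frob M w)) (vnorm_pos hw)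
  have hmem : vnorm (M *ᵥ v) / vnorm v ∈ {t : ℝ | ∃ V : Submodule ℝ (β → ℝ),
      Module.finrank ℝ V = 1 ∧ ∀ w ∈ V, t * vnorm w ≤ vnorm (M *ᵥ w)} := by
    refine ⟨ℝ ∙ v, finrank_span_singleton hv, fun w hw => ?_⟩
    obtain ⟨c, rfl⟩ := Submodule.mem_span_singleton.mp hw
    rw [mulVec_smul, vnorm_smul, vnorm_smul]
    refine le_of_eq ?_
    field_simp [(vnorm_pos hv).ne']
  calc vnorm (M *ᵥ v) = vnorm (M *ᵥ v) / vnorm v * vnorm v :=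
      (div_mul_cancel₀ _ (vnorm_pos hv).ne').symm
    _ ≤ opNorm M * vnorm v := mul_le_mul_of_nonneg_right (le_csSup hbdd hmem) (vnorm_nonneg v)

end OperatorNorm

lemma fromRows_sub_fromRows {R m₁ m₂ n : Type*} [Sub R] (A₁ B₁ : Matrix m₁ n R)
    (A₂ B₂ : Matrix m₂ n R) :
    fromRows A₁ A₂ - fromRows B₁ B₂ = fromRows (A₁ - B₁) (A₂ - B₂) := by
  ext (i | i) j <;> rfl

lemma mul_transpose_sub_mul_transpose {R α β ρ : Type*} [CommRing R] [Fintype ρ]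
    (U X : Matrix α ρ R) (V Y : Matrix β ρ R) :
    U * Vᵀ - X * Yᵀ = ((V - Y) * Xᵀ)ᵀ + (U - X) * Yᵀ + (U - X) * (V - Y)ᵀ := by
  simp only [transpose_mul, transpose_transpose, transpose_sub, Matrix.mul_sub, Matrix.sub_mul]
  abel

lemma frob_mul_transpose_sub_le {α β ρ : Type*} [Fintype α] [Fintype β] [Fintype ρ]
    (U X : Matrix α ρ ℝ) (V Y : Matrix β ρ ℝ) {c : ℝ} (hc : 0 ≤ c)
    (hXY : ∀ w, vnorm (fromRows X Y *ᵥ w) ≤ c * vnorm w) :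
    frob (U * Vᵀ - X * Yᵀ) ≤ √2 * c * frob (fromRows U V - fromRows X Y) +
      frob (fromRows U V - fromRows X Y) ^ 2 / 2 := by
  have hX : ∀ w, vnorm (X *ᵥ w) ≤ c * vnorm w := fun w =>
    (vnorm_le_vnorm_sumElim_left _ _).trans (by simpa only [fromRows_mulVec] using hXY w)
  have hY : ∀ w, vnorm (Y *ᵥ w) ≤ c * vnorm w := fun w =>
    (vnorm_le_vnorm_sumElim_right _ _).trans (by simpa only [fromRows_mulVec] using hXY w)
  have hd : frob (U - X) ^ 2 + frob (V - Y) ^ 2 = frob (fromRows U V - fromRows X Y) ^ 2 := by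
    rw [fromRows_sub_fromRows, frob_fromRows_sq]
  set a := frob (U - X)
  set b := frob (V - Y)
  set d := frob (fromRows U V - fromRows X Y)
  have ha : 0 ≤ a := frob_nonneg _
  have hb : 0 ≤ b := frob_nonneg _
  have hd₀ : 0 ≤ d := frob_nonneg _
  have hab : a + b ≤ √2 * d := by
    rw [← Real.sqrt_sq (add_nonneg ha hb), ← Real.sqrt_sq hd₀, ← Real.sqrt_mul zero_le_two]
    exact Real.sqrt_le_sqrt (by nlinarith [sq_nonneg (a - b)])
  have hab' : a * b ≤ d ^ 2 / 2 := by nlinarith [sq_nonneg (a - b)]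
  calc frob (U * Vᵀ - X * Yᵀ)
      ≤ frob ((V - Y) * Xᵀ) + frob ((U - X) * Yᵀ) + frob ((U - X) * (V - Y)ᵀ) := by
        rw [mul_transpose_sub_mul_transpose, ← frob_transpose ((V - Y) * Xᵀ)]
        exact (frob_add_le _ _).trans (add_le_add_left (frob_add_le _ _) _)
    _ ≤ c * b + c * a + b * a := by
        gcongr
        · exact frob_mul_transpose_le hc hX (V - Y)
        · exact frob_mul_transpose_le hc hY (U - X)
        · exact frob_mul_transpose_le_frob_mul_frob (V - Y) (U - X)
    _ ≤ √2 * c * d + d ^ 2 / 2 := by nlinarith [mul_le_mul_of_nonneg_left hab hc]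

section ProcrustesDistance

variable {α ρ : Type*} [Fintype α] [Fintype ρ] [DecidableEq ρ]

lemma pdist_nonneg (W Z : Matrix α ρ ℝ) : 0 ≤ pdist W Z :=
  Real.sInf_nonneg fun _ ⟨_, _, hd⟩ => hd ▸ frob_nonneg _

lemma le_apply_pdist {f : ℝ → ℝ} (hf : Continuous f) {F : ℝ} (W Z : Matrix α ρ ℝ)
    (h : ∀ R : Matrix ρ ρ ℝ, Rᵀ * R = 1 → F ≤ f (frob (W - Z * R))) :
    F ≤ f (pdist W Z) := by
  have hne : {d | ∃ R : Matrix ρ ρ ℝ, Rᵀ * R = 1 ∧ d = frob (W - Z * R)}.Nonempty :=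
    ⟨_, 1, by simp, rfl⟩
  have hbdd : BddBelow {d | ∃ R : Matrix ρ ρ ℝ, Rᵀ * R = 1 ∧ d = frob (W - Z * R)} :=
    ⟨0, fun _ ⟨_, _, hd⟩ => hd ▸ frob_nonneg _⟩
  refine closure_minimal ?_ (isClosed_le continuous_const hf) (csInf_mem_closure hne hbdd)
  rintro _ ⟨R, hR, rfl⟩
  exact h R hR

end ProcrustesDistance

lemma sqrt_two_mul_add_sq_div_two_le {c p : ℝ} (hp : 0 ≤ p) (hpc : p ≤ 1 / 4 * c) :
    √2 * c * p + p ^ 2 / 2 ≤ 9 / (4 * √2) * c * p := by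
  have hs : (1 : ℝ) ≤ √2 := Real.one_le_sqrt.mpr one_le_two
  have h9 : 9 / (4 * √2) = 9 * √2 / 8 := by
    field_simp
    rw [Real.sq_sqrt zero_le_two]; norm_num
  rw [h9]
  nlinarith [mul_le_mul_of_nonneg_left hpc hp,
    mul_nonneg (sub_nonneg.mpr hs) (mul_nonneg hp (hp.trans hpc))]

/-- Bounding ‖UVᵀ − XYᵀ‖_F by dist of the lifted factors. -/
theorem lifted_frob_diff_le_dist {n₁ n₂ r : ℕ}
    (U X : Matrix (Fin n₁) (Fin r) ℝ) (V Y : Matrix (Fin n₂) (Fin r) ℝ)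
    (h : pdist (Matrix.fromRows U V) (Matrix.fromRows X Y) ≤
      (1 / 4) * opNorm (Matrix.fromRows X Y)) :
    frob (U * Vᵀ - X * Yᵀ) ≤
      (9 / (4 * Real.sqrt 2)) * opNorm (Matrix.fromRows X Y) *
        pdist (Matrix.fromRows U V) (Matrix.fromRows X Y) := by
  set c := opNorm (fromRows X Y)
  have hp := pdist_nonneg (fromRows U V) (fromRows X Y)
  have hc : 0 ≤ c := by linarith
  refine le_trans ?_ (sqrt_two_mul_add_sq_div_two_le hp h)
  refine le_apply_pdist (f := fun d => √2 * c * d + d ^ 2 / 2) (by fun_prop) _ _ fun R hR => ?_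
  have hRZ : ∀ w, vnorm ((fromRows X Y * R) *ᵥ w) ≤ c * vnorm w := fun w => by
    rw [← mulVec_mulVec, ← vnorm_mulVec_of_transpose_mul_self hR w]
    exact vnorm_mulVec_le_opNorm _ _
  have hXY : X * R * (Y * R)ᵀ = X * Yᵀ := by
    rw [transpose_mul, Matrix.mul_assoc, ← Matrix.mul_assoc R, mul_eq_one_comm.mp hR,
      Matrix.one_mul]
  rw [fromRows_mul] at hRZ
  simpa only [hXY, ← fromRows_mul] using frob_mul_transpose_sub_le U (X * R) V (Y * R) hc hRZ
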